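/- arXiv:1007.0921 — 4 statements merged into one kernel-verified Lean document; each statement's English description precedes it below -/
import Mathlib

section
/- For any positive integer n, the partial sum of the linear process decomposes almost surely as Σ_{k=1}^n X_k = A(Σ_{k=1}^n ε_k) + Q_n + R_n, where Q_n = Σ_{k=1}^n Σ_{|j|>n} a_{k−j}(ε_j) and R_n = Σ_{|j|≤n} c_{j,n}(ε_j). -/
/-!
Substituting `j ↦ k - j`, `X_k = ∑_j a_{k-j}(ε_j)`, and this series converges absolutely a.s.
because `E ∑_j ‖a_{k-j}‖ ‖ε_j‖ = E‖ε_0‖ ∑_j ‖a_j‖ < ∞`. Splitting it at `|j| > n` gives `Q_n` plus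
a finite double sum over `1 ≤ k ≤ n`, `|j| ≤ n`; since `b` differs from `a` only by `-A` at `0`,
that double sum is `A (∑_k ε_k) + R_n`.
-/

open MeasureTheory ProbabilityTheory Finset

theorem ae_summable_norm_apply_of_identDistrib {ι Ω Ω' 𝕜 E F : Type*} [Countable ι]
    [MeasurableSpace Ω] [MeasurableSpace Ω'] {μ : Measure Ω} {ν : Measure Ω'}
    [NontriviallyNormedField 𝕜] [NormedAddCommGroup E] [NormedSpace 𝕜 E]
    [MeasurableSpace E] [BorelSpace E] [NormedAddCommGroup F] [NormedSpace 𝕜 F]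
    {T : ι → E →L[𝕜] F} (hT : Summable fun i => ‖T i‖)
    {Y : ι → Ω → E} {Z : Ω' → E} (hY : ∀ i, IdentDistrib (Y i) Z μ ν) (hZ : Integrable Z ν) :
    ∀ᵐ ω ∂μ, Summable fun i => ‖T i (Y i ω)‖ := by
  have hYint : ∀ i, Integrable (Y i) μ := fun i => (hY i).integrable_iff.2 hZ
  refine summable_norm_of_tsum_eLpNorm_ne_top le_rfl
    (fun i => (T i).continuous.comp_aestronglyMeasurable (hYint i).1) (ne_top_of_le_ne_top ?_
      (ENNReal.tsum_le_tsum fun i => eLpNorm_le_mul_eLpNorm_of_ae_le_mul' (c := ‖T i‖₊)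
        (.of_forall fun ω => (T i).le_opENorm (Y i ω)) 1))
  simp_rw [(hY _).eLpNorm_eq, ENNReal.tsum_mul_right]
  exact ENNReal.mul_ne_top (tsum_enorm_ne_top_iff_summable_norm.2 hT)
    (memLp_one_iff_integrable.2 hZ).eLpNorm_ne_top

theorem tsum_eq_tsum_abs_gt_add_sum_Icc {G : Type*} [AddCommGroup G] [TopologicalSpace G]
    [IsTopologicalAddGroup G] [T2Space G] {f : ℤ → G} (hf : Summable f) (n : ℕ) :
    ∑' j, f j = ∑' j : {j : ℤ // (n : ℤ) < |j|}, f j + ∑ j ∈ Icc (-(n : ℤ)) n, f j := by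
  rw [← hf.sum_add_tsum_compl (s := Icc (-(n : ℤ)) n), add_comm]
  congr 1
  have hcompl (j : ℤ) : j ∈ (↑(Icc (-(n : ℤ)) n) : Set ℤ)ᶜ ↔ (n : ℤ) < |j| := by
    simp only [coe_Icc, Set.mem_compl_iff, Set.mem_Icc, not_and, not_le, lt_abs]
    omega
  exact (Equiv.subtypeEquivRight hcompl).tsum_eq fun j => f j

section

variable {𝕜 E F : Type*} [NontriviallyNormedField 𝕜] [NormedAddCommGroup E] [NormedSpace 𝕜 E]
  [NormedAddCommGroup F] [NormedSpace 𝕜 F] {a b : ℤ → E →L[𝕜] F} {A : E →L[𝕜] F}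

theorem sum_sub_eq_sum_sub_sub_ite (hb : ∀ j, j ≠ 0 → b j = a j) (hb0 : b 0 = a 0 - A)
    (K : Finset ℤ) (j : ℤ) :
    ∑ i ∈ K, b (i - j) = ∑ i ∈ K, a (i - j) - if j ∈ K then A else 0 := by
  have hb' : ∀ i, b (i - j) = a (i - j) - if i = j then A else 0 := by
    intro i
    by_cases h : i = j
    · simp [h, hb0]
    · simp [h, hb _ (sub_ne_zero.2 h)]
  rw [sum_congr rfl fun i _ => hb' i, sum_sub_distrib, sum_ite_eq']

theorem sum_sum_apply_sub_eq_apply_sum_add (hb : ∀ j, j ≠ 0 → b j = a j) (hb0 : b 0 = a 0 - A)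
    {K S : Finset ℤ} (hKS : K ⊆ S) (e : ℤ → E) :
    ∑ k ∈ K, ∑ j ∈ S, a (k - j) (e j)
      = A (∑ k ∈ K, e k) + ∑ j ∈ S, (∑ i ∈ K, b (i - j)) (e j) := by
  have hA : ∑ j ∈ S, (if j ∈ K then A else 0) (e j) = A (∑ k ∈ K, e k) :=
    calc ∑ j ∈ S, (if j ∈ K then A else 0) (e j)
        = ∑ j ∈ S, if j ∈ K then A (e j) else 0 :=
          sum_congr rfl fun j _ => by split_ifs <;> simp
      _ = A (∑ k ∈ K, e k) := by rw [sum_ite_mem, inter_eq_right.2 hKS, map_sum]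
  simp only [sum_sub_eq_sum_sub_sub_ite hb hb0, sub_apply, _root_.sum_apply, sum_sub_distrib, hA]
  rw [sum_comm]
  abel

end

theorem partial_sum_decomposition_general
    {H : Type*} [NormedAddCommGroup H] [InnerProductSpace ℝ H] [CompleteSpace H]
    [MeasurableSpace H] [BorelSpace H]
    {Ω : Type*} [MeasurableSpace Ω] {P : Measure Ω}
    (ε : ℤ → Ω → H)
    (hεident : ∀ k, IdentDistrib (ε k) (ε 0) P P)
    (hεint : Integrable (ε 0) P)
    (a : ℤ → H →L[ℝ] H) (ha : Summable fun j => ‖a j‖)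
    (X : ℤ → Ω → H)
    (hX : ∀ k, ∀ᵐ ω ∂P, X k ω = ∑' j : ℤ, a j (ε (k - j) ω))
    (A : H →L[ℝ] H)
    (b : ℤ → H →L[ℝ] H) (hb : ∀ j : ℤ, j ≠ 0 → b j = a j) (hb0 : b 0 = a 0 - A)
    (c : ℤ → ℕ → H →L[ℝ] H)
    (hc : ∀ (j : ℤ) (n : ℕ), c j n = ∑ i ∈ Finset.Icc (1 : ℤ) n, b (i - j))
    (n : ℕ)
    (Q R : Ω → H)
    (hQ : ∀ ω, Q ω = ∑ k ∈ Finset.Icc (1 : ℤ) n,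
      ∑' j : {j : ℤ // (n : ℤ) < |j|}, a (k - (j : ℤ)) (ε (j : ℤ) ω))
    (hR : ∀ ω, R ω = ∑ j ∈ Finset.Icc (-(n : ℤ)) n, c j n (ε j ω)) :
    ∀ᵐ ω ∂P, ∑ k ∈ Finset.Icc (1 : ℤ) n, X k ω
      = A (∑ k ∈ Finset.Icc (1 : ℤ) n, ε k ω) + Q ω + R ω := by
  have hsummable : ∀ k : ℤ, ∀ᵐ ω ∂P, Summable fun j => a (k - j) (ε j ω) := fun k =>
    have hak : Summable fun j => ‖a (k - j)‖ := ha.comp_injective sub_right_injective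
    (ae_summable_norm_apply_of_identDistrib hak hεident hεint).mono fun _ h => h.of_norm
  filter_upwards [(Filter.eventually_all_finset _).2 fun k _ => hX k,
    (Filter.eventually_all_finset (Icc (1 : ℤ) n)).2 fun k _ => hsummable k] with ω hXω hsumω
  have hXk : ∀ k ∈ Icc (1 : ℤ) n, X k ω = (∑' j : {j : ℤ // (n : ℤ) < |j|}, a (k - j) (ε j ω))
      + ∑ j ∈ Icc (-(n : ℤ)) n, a (k - j) (ε j ω) := by
    intro k hk
    rw [hXω k hk, ← (Equiv.subLeft k).tsum_eq]
    simpa only [Equiv.subLeft_apply, sub_sub_cancel] using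
      tsum_eq_tsum_abs_gt_add_sum_Icc (hsumω k hk) n
  have hKS : Icc (1 : ℤ) n ⊆ Icc (-(n : ℤ)) n := Icc_subset_Icc (by omega) le_rfl
  rw [sum_congr rfl hXk, sum_add_distrib, ← hQ ω, hR ω,
    sum_sum_apply_sub_eq_apply_sum_add hb hb0 hKS]
  simp only [hc]
  abel

/-- For any positive integer `n`, the partial sum of the Hilbertian linear
process decomposes almost surely as
`∑_{k=1}^n X_k = A (∑_{k=1}^n ε_k) + Q_n + R_n`, where
`Q_n = ∑_{k=1}^n ∑_{|j|>n} a_{k-j}(ε_j)` and `R_n = ∑_{|j|≤n} c_{j,n}(ε_j)`. -/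
theorem partial_sum_decomposition
    {H : Type*} [NormedAddCommGroup H] [InnerProductSpace ℝ H] [CompleteSpace H]
    [SecondCountableTopology H] [MeasurableSpace H] [BorelSpace H]
    {Ω : Type*} [MeasurableSpace Ω] {P : Measure Ω} [IsProbabilityMeasure P]
    (ε : ℤ → Ω → H) (hεmeas : ∀ k, Measurable (ε k))
    (hεindep : iIndepFun ε P)
    (hεident : ∀ k, IdentDistrib (ε k) (ε 0) P P)
    (hεint : Integrable (ε 0) P) (hεcent : ∫ ω, ε 0 ω ∂P = 0)
    (a : ℤ → H →L[ℝ] H) (ha : Summable fun j => ‖a j‖)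
    (X : ℤ → Ω → H)
    (hX : ∀ k, ∀ᵐ ω ∂P, X k ω = ∑' j : ℤ, a j (ε (k - j) ω))
    (A : H →L[ℝ] H) (hA : A = ∑' j : ℤ, a j)
    (b : ℤ → H →L[ℝ] H) (hb : ∀ j : ℤ, j ≠ 0 → b j = a j) (hb0 : b 0 = a 0 - A)
    (c : ℤ → ℕ → H →L[ℝ] H)
    (hc : ∀ (j : ℤ) (n : ℕ), c j n = ∑ i ∈ Finset.Icc (1 : ℤ) n, b (i - j))
    (n : ℕ) (hn : 0 < n)
    (Q R : Ω → H)
    (hQ : ∀ ω, Q ω = ∑ k ∈ Finset.Icc (1 : ℤ) n,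
      ∑' j : {j : ℤ // (n : ℤ) < |j|}, a (k - (j : ℤ)) (ε (j : ℤ) ω))
    (hR : ∀ ω, R ω = ∑ j ∈ Finset.Icc (-(n : ℤ)) n, c j n (ε j ω)) :
    ∀ᵐ ω ∂P, ∑ k ∈ Finset.Icc (1 : ℤ) n, X k ω
      = A (∑ k ∈ Finset.Icc (1 : ℤ) n, ε k ω) + Q ω + R ω :=
  partial_sum_decomposition_general ε hεident hεint a ha X hX A b hb hb0 c hc n Q R hQ hR
end

section
/- If ε_0 is essentially bounded and Q_n + R_n is essentially bounded, then for every positive integer n, Δ_n(X) ≤ Δ_n(A(ε)) + 2·c(N)·‖Q_n + R_n‖_∞/√n, where ‖·‖_∞ denotes the essential supremum of the H-norm. -/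
open MeasureTheory ProbabilityTheory
open scoped ENNReal NNReal RealInnerProductSpace

/-- The Berry-Esseen distance `Δ_n(Z)` between the law of the norm of the normalized partial
sums `n^{-1/2} ∑_{k=1}^n Z_k` and the law of the norm of the Gaussian variable `N`. -/
noncomputable def BEDelta {H : Type*} [NormedAddCommGroup H] [NormedSpace ℝ H]
    {Ω : Type*} [MeasurableSpace Ω] (P : Measure Ω)
    (Z : ℤ → Ω → H) (N : Ω → H) (n : ℕ) : ℝ :=
  ⨆ t : ℝ, |(P {ω | ‖(Real.sqrt n)⁻¹ • ∑ k ∈ Finset.Icc (1 : ℤ) n, Z k ω‖ ≤ t}).toReal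
    - (P {ω | ‖N ω‖ ≤ t}).toReal|

/-!
Summing the linear process over `k = 1, …, n` and regrouping by the index of the innovation
gives, almost surely, `∑ X_k = ∑ A(ε_k) + Q_n + R_n`; absolute summability of `(a_j)` and the
essential boundedness of the identically distributed `ε_j` justify the rearrangement. So the
norms of the two normalized sums differ by at most `‖Q_n + R_n‖_∞ / √n` almost surely. Since
the distribution function of `‖N‖` is `c(N)`-Lipschitz, a perturbation of size `δ` changes the
Kolmogorov distance to `‖N‖` by at most `c(N) δ`.
-/

open Finset

section LinearProcess

variable {E F : Type*} [NormedAddCommGroup E] [NormedSpace ℝ E]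
  [NormedAddCommGroup F] [NormedSpace ℝ F]

theorem summable_apply_sub_of_norm_le [CompleteSpace F] {a : ℤ → E →L[ℝ] F}
    (ha : Summable fun j => ‖a j‖) {e : ℤ → E} {C : ℝ} (he : ∀ j, ‖e j‖ ≤ C) (k : ℤ) :
    Summable fun j => a (k - j) (e j) :=
  .of_norm_bounded ((ha.comp_injective (sub_right_injective (b := k))).mul_right C)
    fun j => (a (k - j)).le_of_opNorm_le_of_le le_rfl (he j)

theorem sum_tsum_apply_sub_eq_sum_add_tsum_compl [CompleteSpace F] {a : ℤ → E →L[ℝ] F}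
    (ha : Summable fun j => ‖a j‖) {e : ℤ → E} {C : ℝ} (he : ∀ j, ‖e j‖ ≤ C)
    (s T : Finset ℤ) :
    ∑ k ∈ s, ∑' j, a j (e (k - j))
      = ∑ j ∈ T, ∑ k ∈ s, a (k - j) (e j)
        + ∑ k ∈ s, ∑' j : ↥(T : Set ℤ)ᶜ, a (k - j) (e j) := by
  calc ∑ k ∈ s, ∑' j, a j (e (k - j))
      = ∑ k ∈ s, ∑' j, a (k - j) (e j) :=
        sum_congr rfl fun k _ => by
          rw [← (Equiv.subLeft k).tsum_eq]
          simp [Equiv.subLeft_apply, sub_sub_cancel]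
    _ = ∑ k ∈ s, (∑ j ∈ T, a (k - j) (e j) + ∑' j : ↥(T : Set ℤ)ᶜ, a (k - j) (e j)) :=
        sum_congr rfl fun k _ => (summable_apply_sub_of_norm_le ha he k).sum_add_tsum_compl.symm
    _ = _ := by rw [sum_add_distrib, sum_comm]

theorem sum_Icc_sub_eq_add_ite {a b : ℤ → E →L[ℝ] F} {A : E →L[ℝ] F}
    (hb : ∀ j, j ≠ 0 → b j = a j) (hb0 : b 0 = a 0 - A) (n : ℕ) (j : ℤ) :
    ∑ k ∈ Icc (1 : ℤ) n, a (k - j)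
      = ∑ k ∈ Icc (1 : ℤ) n, b (k - j) + if j ∈ Icc (1 : ℤ) n then A else 0 := by
  have hba : ∀ i, b i = a i - if i = 0 then A else 0 := fun i => by
    rcases eq_or_ne i 0 with rfl | hi
    · simp [hb0]
    · simp [hb i hi, hi]
  simp only [hba, sum_sub_distrib, sub_eq_zero, sum_ite_eq', sub_add_cancel]

theorem sum_tsum_apply_sub_eq_add_tail_add_boundary [CompleteSpace F] {a b : ℤ → E →L[ℝ] F}
    (ha : Summable fun j => ‖a j‖) {A : E →L[ℝ] F}
    (hb : ∀ j, j ≠ 0 → b j = a j) (hb0 : b 0 = a 0 - A) {c : ℤ → ℕ → E →L[ℝ] F}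
    (hc : ∀ j n, c j n = ∑ i ∈ Icc (1 : ℤ) n, b (i - j))
    {e : ℤ → E} {C : ℝ} (he : ∀ j, ‖e j‖ ≤ C) (n : ℕ) :
    ∑ k ∈ Icc (1 : ℤ) n, ∑' j, a j (e (k - j))
      = ∑ k ∈ Icc (1 : ℤ) n, A (e k)
        + (∑ k ∈ Icc (1 : ℤ) n, ∑' j : {j : ℤ // (n : ℤ) < |j|}, a (k - j) (e j)
          + ∑ j ∈ Icc (-(n : ℤ)) n, c j n (e j)) := by
  have hcompl : ((Icc (-(n : ℤ)) n : Finset ℤ) : Set ℤ)ᶜ = {j | (n : ℤ) < |j|} := by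
    ext j
    simp only [Set.mem_compl_iff, coe_Icc, Set.mem_Icc, Set.mem_ofPred_eq, lt_abs]
    omega
  have hboundary : ∑ j ∈ Icc (-(n : ℤ)) n, ∑ k ∈ Icc (1 : ℤ) n, a (k - j) (e j)
      = ∑ j ∈ Icc (-(n : ℤ)) n, c j n (e j) + ∑ k ∈ Icc (1 : ℤ) n, A (e k) := by
    simp only [← _root_.sum_apply, sum_Icc_sub_eq_add_ite hb hb0, ← hc, add_apply, sum_add_distrib,
      apply_ite DFunLike.coe, ite_apply, zero_apply, sum_ite_mem]
    rw [inter_eq_right.2 (Icc_subset_Icc (by omega) le_rfl)]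
  have htail : ∀ k : ℤ, ∑' j : ↥((Icc (-(n : ℤ)) n : Finset ℤ) : Set ℤ)ᶜ, a (k - j) (e j)
      = ∑' j : {j : ℤ // (n : ℤ) < |j|}, a (k - j) (e j) :=
    fun k => tsum_congr_set_coe (fun j => a (k - j) (e j)) hcompl
  rw [sum_tsum_apply_sub_eq_sum_add_tsum_compl ha he _ (Icc (-(n : ℤ)) n), hboundary]
  simp only [htail]
  abel

end LinearProcess

section KolmogorovDistance

variable {Ω : Type*} [MeasurableSpace Ω] {P : Measure Ω}

noncomputable def kolmogorovDist (P : Measure Ω) (U W : Ω → ℝ) : ℝ :=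
  ⨆ t : ℝ, |P.real {ω | U ω ≤ t} - P.real {ω | W ω ≤ t}|

theorem abs_sub_le_kolmogorovDist [IsFiniteMeasure P] (U W : Ω → ℝ) (t : ℝ) :
    |P.real {ω | U ω ≤ t} - P.real {ω | W ω ≤ t}| ≤ kolmogorovDist P U W :=
  le_ciSup (f := fun t => |P.real {ω | U ω ≤ t} - P.real {ω | W ω ≤ t}|)
    ⟨P.real Set.univ, by
      rintro _ ⟨t, rfl⟩
      exact abs_sub_le_of_nonneg_of_le measureReal_nonneg (measureReal_mono (Set.subset_univ _))
        measureReal_nonneg (measureReal_mono (Set.subset_univ _))⟩ t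

theorem measureReal_mono_ae [IsFiniteMeasure P] {s t : Set Ω} (h : s ≤ᵐ[P] t) :
    P.real s ≤ P.real t :=
  ENNReal.toReal_mono (measure_ne_top P t) (measure_mono_ae h)

theorem kolmogorovDist_le_of_ae_abs_sub_le [IsFiniteMeasure P] {U V W : Ω → ℝ} {δ L : ℝ}
    (hδ : 0 ≤ δ) (hUV : ∀ᵐ ω ∂P, |U ω - V ω| ≤ δ)
    (hW : ∀ t t', t ≤ t' → P.real {ω | W ω ≤ t'} - P.real {ω | W ω ≤ t} ≤ L * (t' - t)) :
    kolmogorovDist P U W ≤ kolmogorovDist P V W + L * δ := by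
  refine ciSup_le fun t => abs_sub_le_iff.2 ⟨?_, ?_⟩
  · have hle : P.real {ω | U ω ≤ t} ≤ P.real {ω | V ω ≤ t + δ} :=
      measureReal_mono_ae <| hUV.mono fun ω h (hU : U ω ≤ t) => by
        show V ω ≤ t + δ
        linarith [(abs_sub_le_iff.1 h).2]
    have hdist := (abs_sub_le_iff.1 (abs_sub_le_kolmogorovDist (P := P) V W (t + δ))).1
    linarith [hW t (t + δ) (by linarith)]
  · have hle : P.real {ω | V ω ≤ t - δ} ≤ P.real {ω | U ω ≤ t} :=
      measureReal_mono_ae <| hUV.mono fun ω h (hV : V ω ≤ t - δ) => by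
        show U ω ≤ t
        linarith [(abs_sub_le_iff.1 h).1]
    have hdist := (abs_sub_le_iff.1 (abs_sub_le_kolmogorovDist (P := P) V W (t - δ))).2
    linarith [hW (t - δ) t (by linarith)]

theorem measureReal_setOf_le_sub_le_of_density_le {g : Ω → ℝ} (hg : Measurable g)
    {f : ℝ → ℝ} (hdens : P.map g = volume.withDensity fun x => ENNReal.ofReal (f x))
    {c : ℝ} (hc : 0 ≤ c) (hf : ∀ x, f x ≤ c) [IsFiniteMeasure P] {t t' : ℝ} (htt' : t ≤ t') :
    P.real {ω | g ω ≤ t'} - P.real {ω | g ω ≤ t} ≤ c * (t' - t) := by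
  have hdiff : {ω | g ω ≤ t'} \ {ω | g ω ≤ t} = g ⁻¹' Set.Ioc t t' := by
    ext ω
    simp [and_comm]
  rw [← measureReal_sdiff (Set.ofPred_subset_ofPred.2 fun ω h => h.trans htt')
    (measurableSet_le hg measurable_const), hdiff, ← map_measureReal_apply hg measurableSet_Ioc, hdens]
  refine ENNReal.toReal_le_of_le_ofReal (mul_nonneg hc (sub_nonneg.2 htt')) ?_
  calc volume.withDensity (fun x => ENNReal.ofReal (f x)) (Set.Ioc t t')
      = ∫⁻ x in Set.Ioc t t', ENNReal.ofReal (f x) := withDensity_apply _ measurableSet_Ioc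
    _ ≤ ∫⁻ _ in Set.Ioc t t', ENNReal.ofReal c :=
        lintegral_mono fun x => ENNReal.ofReal_le_ofReal (hf x)
    _ = ENNReal.ofReal (c * (t' - t)) := by
        rw [setLIntegral_const, Real.volume_Ioc, ENNReal.ofReal_mul hc]

end KolmogorovDistance

theorem ae_forall_norm_le_lpNorm_of_identDistrib {Ω ι E : Type*} [MeasurableSpace Ω]
    {P : Measure Ω} [Countable ι] [NormedAddCommGroup E] [MeasurableSpace E]
    [OpensMeasurableSpace E] {ε : ι → Ω → E} {i₀ : ι}
    (hident : ∀ i, IdentDistrib (ε i) (ε i₀) P P) (hbdd : MemLp (ε i₀) ∞ P) :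
    ∀ᵐ ω ∂P, ∀ i, ‖ε i ω‖ ≤ lpNorm (ε i₀) ∞ P := by
  refine ae_all_iff.2 fun i => ?_
  simpa only [mem_closedBall_zero_iff] using (hident i).symm.ae_mem_snd
    (t := Metric.closedBall 0 (lpNorm (ε i₀) ∞ P)) Metric.isClosed_closedBall.measurableSet
    (by simpa only [mem_closedBall_zero_iff] using ae_le_lpNorm_exponent_top hbdd)

theorem berry_esseen_reduction_essSup_general
    {H : Type*} [NormedAddCommGroup H] [InnerProductSpace ℝ H] [CompleteSpace H]
    [MeasurableSpace H] [BorelSpace H]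
    {Ω : Type*} [MeasurableSpace Ω] {P : Measure Ω} [IsProbabilityMeasure P]
    (ε : ℤ → Ω → H)
    (hεident : ∀ k, IdentDistrib (ε k) (ε 0) P P)
    (hεbdd : MemLp (ε 0) ∞ P)
    (a : ℤ → H →L[ℝ] H) (ha : Summable fun j => ‖a j‖)
    (X : ℤ → Ω → H)
    (hX : ∀ k, ∀ᵐ ω ∂P, X k ω = ∑' j : ℤ, a j (ε (k - j) ω))
    (A : H →L[ℝ] H)
    (b : ℤ → H →L[ℝ] H) (hb : ∀ j : ℤ, j ≠ 0 → b j = a j) (hb0 : b 0 = a 0 - A)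
    (c : ℤ → ℕ → H →L[ℝ] H)
    (hc : ∀ (j : ℤ) (n : ℕ), c j n = ∑ i ∈ Finset.Icc (1 : ℤ) n, b (i - j))
    (n : ℕ)
    (Q R : Ω → H)
    (hQ : ∀ ω, Q ω = ∑ k ∈ Finset.Icc (1 : ℤ) n,
      ∑' j : {j : ℤ // (n : ℤ) < |j|}, a (k - (j : ℤ)) (ε (j : ℤ) ω))
    (hR : ∀ ω, R ω = ∑ j ∈ Finset.Icc (-(n : ℤ)) n, c j n (ε j ω))
    (hQRbdd : MemLp (fun ω => Q ω + R ω) ∞ P)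
    -- `N` is a centered Gaussian `H`-valued random variable ...
    (N : Ω → H) (hNmeas : Measurable N)
    -- the law of `‖N‖` admits a density bounded by `cN`:
    (cN : ℝ) (f : ℝ → ℝ) (hf_nonneg : ∀ x, 0 ≤ f x) (hf_le : ∀ x, f x ≤ cN)
    (hNdens : Measure.map (fun ω => ‖N ω‖) P
      = MeasureTheory.volume.withDensity (fun x => ENNReal.ofReal (f x))) :
    BEDelta P X N n ≤ BEDelta P (fun k ω => A (ε k ω)) N n
      + 2 * cN * (eLpNorm (fun ω => Q ω + R ω) ∞ P).toReal / Real.sqrt n := by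
  set M := lpNorm (fun ω => Q ω + R ω) ∞ P
  have hM : 0 ≤ M := lpNorm_nonneg
  have hcN : 0 ≤ cN := (hf_nonneg 0).trans (hf_le 0)
  have hsum : ∀ᵐ ω ∂P, ∑ k ∈ Icc (1 : ℤ) n, X k ω
      = ∑ k ∈ Icc (1 : ℤ) n, A (ε k ω) + (Q ω + R ω) := by
    filter_upwards [ae_all_iff.2 hX, ae_forall_norm_le_lpNorm_of_identDistrib hεident hεbdd]
      with ω hXω hεω
    rw [sum_congr rfl fun k _ => hXω k, hQ, hR]
    exact sum_tsum_apply_sub_eq_add_tail_add_boundary ha hb hb0 hc hεω n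
  have hclose : ∀ᵐ ω ∂P, |‖(√n)⁻¹ • ∑ k ∈ Icc (1 : ℤ) n, X k ω‖
      - ‖(√n)⁻¹ • ∑ k ∈ Icc (1 : ℤ) n, A (ε k ω)‖| ≤ M / √n := by
    filter_upwards [hsum, ae_le_lpNorm_exponent_top hQRbdd] with ω hω hQR
    refine (abs_norm_sub_norm_le _ _).trans ?_
    rw [hω, smul_add, add_sub_cancel_left, norm_smul, norm_inv, Real.norm_of_nonneg (by positivity),
      div_eq_inv_mul]
    exact mul_le_mul_of_nonneg_left hQR (by positivity)
  -- `BEDelta` unfolds to `kolmogorovDist` of the norms of the normalized sums and of `N`.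
  calc BEDelta P X N n ≤ BEDelta P (fun k ω => A (ε k ω)) N n + cN * (M / √n) :=
      kolmogorovDist_le_of_ae_abs_sub_le (by positivity) hclose fun t t' htt' =>
        measureReal_setOf_le_sub_le_of_density_le hNmeas.norm hNdens hcN hf_le htt'
    _ ≤ _ := by
      rw [toReal_eLpNorm hQRbdd.aestronglyMeasurable, mul_div_assoc]
      gcongr
      linarith

/-- If `ε₀` is essentially bounded and `Q_n + R_n` is essentially bounded,
then for every positive integer `n`,
`Δ_n(X) ≤ Δ_n(A(ε)) + 2 c(N) ‖Q_n + R_n‖_∞ / √n`. -/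
theorem berry_esseen_reduction_essSup
    {H : Type*} [NormedAddCommGroup H] [InnerProductSpace ℝ H] [CompleteSpace H]
    [SecondCountableTopology H] [MeasurableSpace H] [BorelSpace H]
    {Ω : Type*} [MeasurableSpace Ω] {P : Measure Ω} [IsProbabilityMeasure P]
    (ε : ℤ → Ω → H) (hεmeas : ∀ k, Measurable (ε k))
    (hεindep : iIndepFun ε P)
    (hεident : ∀ k, IdentDistrib (ε k) (ε 0) P P)
    (hεint : Integrable (ε 0) P) (hεcent : ∫ ω, ε 0 ω ∂P = 0)
    (hεbdd : MemLp (ε 0) ∞ P)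
    (a : ℤ → H →L[ℝ] H) (ha : Summable fun j => ‖a j‖)
    (X : ℤ → Ω → H)
    (hX : ∀ k, ∀ᵐ ω ∂P, X k ω = ∑' j : ℤ, a j (ε (k - j) ω))
    (A : H →L[ℝ] H) (hA : A = ∑' j : ℤ, a j)
    (b : ℤ → H →L[ℝ] H) (hb : ∀ j : ℤ, j ≠ 0 → b j = a j) (hb0 : b 0 = a 0 - A)
    (c : ℤ → ℕ → H →L[ℝ] H)
    (hc : ∀ (j : ℤ) (n : ℕ), c j n = ∑ i ∈ Finset.Icc (1 : ℤ) n, b (i - j))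
    (n : ℕ) (hn : 0 < n)
    (Q R : Ω → H)
    (hQ : ∀ ω, Q ω = ∑ k ∈ Finset.Icc (1 : ℤ) n,
      ∑' j : {j : ℤ // (n : ℤ) < |j|}, a (k - (j : ℤ)) (ε (j : ℤ) ω))
    (hR : ∀ ω, R ω = ∑ j ∈ Finset.Icc (-(n : ℤ)) n, c j n (ε j ω))
    (hQRbdd : MemLp (fun ω => Q ω + R ω) ∞ P)
    -- `N` is a centered Gaussian `H`-valued random variable ...
    (N : Ω → H) (hNmeas : Measurable N)
    (hNgauss : ∀ x : H, ∃ v : ℝ≥0,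
      Measure.map (fun ω => ⟪N ω, x⟫) P = gaussianReal 0 v)
    -- ... whose covariance operator equals that of `A(ε₀)`:
    (hNcov : ∀ x y : H, ∫ ω, ⟪N ω, x⟫ * ⟪N ω, y⟫ ∂P
      = ∫ ω, ⟪A (ε 0 ω), x⟫ * ⟪A (ε 0 ω), y⟫ ∂P)
    -- the law of `‖N‖` admits a density bounded by `cN`:
    (cN : ℝ) (f : ℝ → ℝ) (hf_nonneg : ∀ x, 0 ≤ f x) (hf_le : ∀ x, f x ≤ cN)
    (hNdens : Measure.map (fun ω => ‖N ω‖) P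
      = MeasureTheory.volume.withDensity (fun x => ENNReal.ofReal (f x))) :
    BEDelta P X N n ≤ BEDelta P (fun k ω => A (ε k ω)) N n
      + 2 * cN * (eLpNorm (fun ω => Q ω + R ω) ∞ P).toReal / Real.sqrt n :=
  berry_esseen_reduction_essSup_general ε hεident hεbdd a ha X hX A b hb hb0 c hc n Q R hQ hR hQRbdd
    N hNmeas cN f hf_nonneg hf_le hNdens
end

section
/- If ε_0 is essentially bounded and Σ_{j∈ℤ} |j|·‖a_j‖ < ∞, then for every positive integer n, ‖Q_n + R_n‖_∞ ≤ 7·‖ε_0‖_∞·Σ_{j∈ℤ}|j|·‖a_j‖, where ‖·‖_∞ denotes the essential supremum of the H-norm. -/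
/-!
Off a null set every `‖ε j‖` is at most `M = ‖ε₀‖_∞`, so it suffices to bound operator norms.
In `Q_n` the operator `a m` is met for the `k ∈ [1, n]` with `n < |k - m|`; writing
`c_j = ∑_{j + m ∈ [1, n]} a m` for `j ∉ [1, n]` and `c_j = -∑_{j + m ∉ [1, n]} a m` for
`j ∈ [1, n]`, the same holds for `R_n`. In each case a given `m` is met for at most `|m|`
indices, because an integer interval and its translate by `m` differ in at most `|m|` points
on each side. Hence `‖Q_n‖ ≤ M S` and `‖R_n‖ ≤ 2 M S` with `S = ∑ |m| ‖a m‖`.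
-/

open MeasureTheory ProbabilityTheory
open scoped ENNReal NNReal

section Counting

open Finset

lemma card_filter_mem_Icc_add_notMem_Icc_le (s : Finset ℤ) (lo hi m : ℤ) :
    #{j ∈ s | j ∈ Icc lo hi ∧ j + m ∉ Icc lo hi} ≤ m.natAbs := by
  calc #{j ∈ s | j ∈ Icc lo hi ∧ j + m ∉ Icc lo hi}
      ≤ #(Icc (hi - m + 1) hi ∪ Icc lo (lo - m - 1)) :=
        card_le_card fun j hj => by simp only [mem_filter, mem_Icc, mem_union] at hj ⊢; omega
    _ ≤ #(Icc (hi - m + 1) hi) + #(Icc lo (lo - m - 1)) := card_union_le _ _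
    _ ≤ m.natAbs := by simp only [Int.card_Icc]; omega

lemma card_filter_notMem_Icc_add_mem_Icc_le (s : Finset ℤ) (lo hi m : ℤ) :
    #{j ∈ s | j ∉ Icc lo hi ∧ j + m ∈ Icc lo hi} ≤ m.natAbs := by
  calc #{j ∈ s | j ∉ Icc lo hi ∧ j + m ∈ Icc lo hi}
      ≤ #(Icc (lo - m) (lo - 1) ∪ Icc (hi + 1) (hi - m)) :=
        card_le_card fun j hj => by simp only [mem_filter, mem_Icc, mem_union] at hj ⊢; omega
    _ ≤ #(Icc (lo - m) (lo - 1)) + #(Icc (hi + 1) (hi - m)) := card_union_le _ _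
    _ ≤ m.natAbs := by simp only [Int.card_Icc]; omega

lemma card_filter_lt_abs_sub_le (N m : ℤ) :
    #{k ∈ Icc 1 N | N < |k - m|} ≤ m.natAbs := by
  calc #{k ∈ Icc 1 N | N < |k - m|}
      ≤ #{k ∈ Icc 1 N | k ∈ Icc 1 N ∧ k + -m ∉ Icc 1 N} :=
        card_le_card <| monotone_filter_right _ fun k hk hlt => by
          simp only [mem_Icc, lt_abs] at hk hlt ⊢; omega
    _ ≤ (-m).natAbs := card_filter_mem_Icc_add_notMem_Icc_le _ _ _ _
    _ = m.natAbs := Int.natAbs_neg m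

lemma sum_tsum_indicator_le_tsum_abs_mul {g : ℤ → ℝ} (hg0 : 0 ≤ g) (hg : Summable g)
    (hg1 : Summable fun m : ℤ => |(m : ℝ)| * g m) (s : Finset ℤ) (p : ℤ → ℤ → Prop)
    [DecidableRel p] (hcard : ∀ m, #{k ∈ s | p k m} ≤ m.natAbs) :
    ∑ k ∈ s, ∑' m, {m | p k m}.indicator g m ≤ ∑' m : ℤ, |(m : ℝ)| * g m := by
  have hsummable (k : ℤ) : Summable ({m | p k m}.indicator g) := hg.indicator _
  have hcount (m : ℤ) : ∑ k ∈ s, {m | p k m}.indicator g m ≤ |(m : ℝ)| * g m := by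
    simp only [Set.indicator_apply, Set.mem_ofPred_eq]
    rw [← sum_filter, sum_const, nsmul_eq_mul, ← Int.cast_abs, ← Nat.cast_natAbs]
    exact mul_le_mul_of_nonneg_right (mod_cast hcard m) (hg0 m)
  rw [← Summable.tsum_finsetSum fun k _ => hsummable k]
  exact Summable.tsum_le_tsum hcount (summable_sum fun k _ => hsummable k) hg1

end Counting

section Reindexing

variable {α : Type*} [AddCommMonoid α] [TopologicalSpace α]

lemma tsum_subtype_comp_sub (p : ℤ → Prop) (f : ℤ → α) (k : ℤ) :
    ∑' j : {j : ℤ // p j}, f (k - j) = ∑' m, {m | p (k - m)}.indicator f m := by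
  refine (tsum_subtype {j | p j} fun j => f (k - j)).trans ?_
  rw [← (Equiv.subLeft k).tsum_eq]
  congr 1 with m
  classical
  simp [Set.indicator_apply]

lemma sum_comp_sub_eq_tsum_indicator (s : Finset ℤ) (f : ℤ → α) (j : ℤ) :
    ∑ i ∈ s, f (i - j) = ∑' m, {m | j + m ∈ s}.indicator f m := by
  rw [← s.tsum_subtype]
  refine (tsum_subtype (s : Set ℤ) fun i => f (i - j)).trans ?_
  rw [← (Equiv.addLeft j).tsum_eq]
  congr 1 with m
  classical
  simp [Set.indicator_apply]

end Reindexing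

lemma sum_comp_sub_eq_sub_ite {G : Type*} [AddCommGroup G] {a b : ℤ → G} {A : G}
    (hb : ∀ j, j ≠ 0 → b j = a j) (hb0 : b 0 = a 0 - A) (s : Finset ℤ) (j : ℤ) :
    ∑ i ∈ s, b (i - j) = ∑ i ∈ s, a (i - j) - if j ∈ s then A else 0 := by
  have hb' (i : ℤ) : b (i - j) = a (i - j) - if i = j then A else 0 := by
    by_cases h : i = j
    · simp [h, hb0]
    · rw [hb _ (sub_ne_zero.2 h), if_neg h, sub_zero]
  rw [Finset.sum_congr rfl fun i _ => hb' i, Finset.sum_sub_distrib, Finset.sum_ite_eq']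

lemma sum_tsum_tail_comp_sub_le {g : ℤ → ℝ} (hg0 : 0 ≤ g) (hg : Summable g)
    (hg1 : Summable fun m : ℤ => |(m : ℝ)| * g m) (N : ℤ) :
    ∑ k ∈ Finset.Icc 1 N, ∑' j : {j : ℤ // N < |j|}, g (k - j)
      ≤ ∑' m : ℤ, |(m : ℝ)| * g m := by
  simp_rw [tsum_subtype_comp_sub]
  exact sum_tsum_indicator_le_tsum_abs_mul hg0 hg hg1 _ (fun k m => N < |k - m|)
    (card_filter_lt_abs_sub_le N)

section Operators

open Finset

variable {𝕜 E F : Type*} [NontriviallyNormedField 𝕜] [NormedAddCommGroup E] [NormedSpace 𝕜 E]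
  [NormedAddCommGroup F] [NormedSpace 𝕜 F]

lemma norm_sum_apply_le {ι : Type*} (s : Finset ι) (f : ι → E →L[𝕜] F) {x : ι → E} {M : ℝ}
    (hx : ∀ i, ‖x i‖ ≤ M) : ‖∑ i ∈ s, f i (x i)‖ ≤ (∑ i ∈ s, ‖f i‖) * M :=
  calc ‖∑ i ∈ s, f i (x i)‖ ≤ ∑ i ∈ s, ‖f i (x i)‖ := norm_sum_le _ _
    _ ≤ ∑ i ∈ s, ‖f i‖ * M := sum_le_sum fun i _ => (f i).le_opNorm_of_le (hx i)
    _ = (∑ i ∈ s, ‖f i‖) * M := (sum_mul _ _ _).symm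

lemma norm_tsum_apply_le {ι : Type*} {f : ι → E →L[𝕜] F} (hf : Summable (‖f ·‖)) {x : ι → E}
    {M : ℝ} (hx : ∀ i, ‖x i‖ ≤ M) : ‖∑' i, f i (x i)‖ ≤ (∑' i, ‖f i‖) * M := by
  have hle (i : ι) : ‖f i (x i)‖ ≤ ‖f i‖ * M := (f i).le_opNorm_of_le (hx i)
  have hsummable : Summable fun i => ‖f i (x i)‖ :=
    (hf.mul_right M).of_nonneg_of_le (fun _ => norm_nonneg _) hle
  calc ‖∑' i, f i (x i)‖ ≤ ∑' i, ‖f i (x i)‖ := norm_tsum_le_tsum_norm hsummable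
    _ ≤ ∑' i, ‖f i‖ * M := hsummable.tsum_le_tsum hle (hf.mul_right M)
    _ = (∑' i, ‖f i‖) * M := tsum_mul_right

lemma norm_sum_tsum_tail_apply_le {a : ℤ → E →L[𝕜] F} (ha : Summable (‖a ·‖))
    (ha1 : Summable fun m : ℤ => |(m : ℝ)| * ‖a m‖) (N : ℤ) {x : ℤ → E} {M : ℝ}
    (hx : ∀ j, ‖x j‖ ≤ M) :
    ‖∑ k ∈ Icc 1 N, ∑' j : {j : ℤ // N < |j|}, a (k - j) (x j)‖
      ≤ (∑' m : ℤ, |(m : ℝ)| * ‖a m‖) * M := by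
  have hM : 0 ≤ M := (norm_nonneg _).trans (hx 0)
  have hsummable (k : ℤ) : Summable fun j : {j : ℤ // N < |j|} => ‖a (k - j)‖ :=
    ((Equiv.subLeft k).summable_iff.2 ha).comp_injective Subtype.coe_injective
  calc ‖∑ k ∈ Icc 1 N, ∑' j : {j : ℤ // N < |j|}, a (k - j) (x j)‖
      ≤ ∑ k ∈ Icc 1 N, ‖∑' j : {j : ℤ // N < |j|}, a (k - j) (x j)‖ := norm_sum_le _ _
    _ ≤ ∑ k ∈ Icc 1 N, (∑' j : {j : ℤ // N < |j|}, ‖a (k - j)‖) * M :=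
        sum_le_sum fun k _ => norm_tsum_apply_le (hsummable k) fun j => hx j
    _ = (∑ k ∈ Icc 1 N, ∑' j : {j : ℤ // N < |j|}, ‖a (k - j)‖) * M := (sum_mul _ _ _).symm
    _ ≤ (∑' m : ℤ, |(m : ℝ)| * ‖a m‖) * M := by
        gcongr
        exact sum_tsum_tail_comp_sub_le (fun _ => norm_nonneg _) ha ha1 N

end Operators

section Coefficients

open Finset

variable {G : Type*} [NormedAddCommGroup G] {a : ℤ → G}

lemma norm_tsum_indicator_le (ha : Summable (‖a ·‖)) (T : Set ℤ) :
    ‖∑' m, T.indicator a m‖ ≤ ∑' m, T.indicator (‖a ·‖) m := by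
  simp_rw [← norm_indicator_eq_indicator_norm]
  refine norm_tsum_le_tsum_norm ?_
  simpa only [norm_indicator_eq_indicator_norm] using ha.indicator T

lemma norm_sum_comp_sub_le (ha : Summable (‖a ·‖)) (s : Finset ℤ) (j : ℤ) :
    ‖∑ i ∈ s, a (i - j)‖ ≤ ∑' m, {m | j + m ∈ s}.indicator (‖a ·‖) m := by
  rw [sum_comp_sub_eq_tsum_indicator]
  exact norm_tsum_indicator_le ha _

lemma norm_sum_comp_sub_sub_tsum_le [CompleteSpace G] (ha : Summable (‖a ·‖)) (s : Finset ℤ)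
    (j : ℤ) : ‖∑ i ∈ s, a (i - j) - ∑' m, a m‖ ≤ ∑' m, {m | j + m ∉ s}.indicator (‖a ·‖) m := by
  set T : Set ℤ := {m | j + m ∈ s}
  have hsplit : ∑' m, a m = ∑' m, T.indicator a m + ∑' m, Tᶜ.indicator a m := by
    rw [← Summable.tsum_add (ha.of_norm.indicator _) (ha.of_norm.indicator _)]
    exact congrArg tsum (T.indicator_self_add_compl a).symm
  rw [sum_comp_sub_eq_tsum_indicator, hsplit, sub_add_cancel_left, norm_neg]
  exact norm_tsum_indicator_le ha Tᶜ

lemma sum_norm_sub_ite_tsum_le [CompleteSpace G] (ha : Summable (‖a ·‖))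
    (ha1 : Summable fun m : ℤ => |(m : ℝ)| * ‖a m‖) (N : ℤ) :
    ∑ j ∈ Icc (-N) N, ‖∑ i ∈ Icc 1 N, a (i - j) - if j ∈ Icc 1 N then ∑' m, a m else 0‖
      ≤ 2 * ∑' m : ℤ, |(m : ℝ)| * ‖a m‖ := by
  have hg0 : 0 ≤ fun m => ‖a m‖ := fun _ => norm_nonneg _
  rw [← sum_filter_add_sum_filter_not _ (· ∈ Icc 1 N), two_mul]
  refine add_le_add ?_ ?_
  · calc _ ≤ ∑ j ∈ Icc (-N) N with j ∈ Icc 1 N, ∑' m, {m | j + m ∉ Icc 1 N}.indicator (‖a ·‖) m :=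
          sum_le_sum fun j hj => by
            rw [if_pos (mem_filter.1 hj).2]; exact norm_sum_comp_sub_sub_tsum_le ha _ j
      _ ≤ _ := sum_tsum_indicator_le_tsum_abs_mul hg0 ha ha1 _ (fun j m => j + m ∉ Icc 1 N)
          fun m => by rw [filter_filter]; exact card_filter_mem_Icc_add_notMem_Icc_le _ _ _ _
  · calc _ ≤ ∑ j ∈ Icc (-N) N with j ∉ Icc 1 N, ∑' m, {m | j + m ∈ Icc 1 N}.indicator (‖a ·‖) m :=
          sum_le_sum fun j hj => by
            rw [if_neg (mem_filter.1 hj).2, sub_zero]; exact norm_sum_comp_sub_le ha _ j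
      _ ≤ _ := sum_tsum_indicator_le_tsum_abs_mul hg0 ha ha1 _ (fun j m => j + m ∈ Icc 1 N)
          fun m => by rw [filter_filter]; exact card_filter_notMem_Icc_add_mem_Icc_le _ _ _ _

end Coefficients

lemma ae_forall_norm_le_of_identDistrib {Ω ι E : Type*} [MeasurableSpace Ω] {P : Measure Ω}
    [Countable ι] [NormedAddCommGroup E] [MeasurableSpace E] [OpensMeasurableSpace E]
    {X : ι → Ω → E} {i₀ : ι} (hX : ∀ i, IdentDistrib (X i) (X i₀) P P)
    (hfin : eLpNorm (X i₀) ∞ P ≠ ∞) :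
    ∀ᵐ ω ∂P, ∀ i, ‖X i ω‖ ≤ (eLpNorm (X i₀) ∞ P).toReal := by
  refine ae_all_iff.2 fun i => ?_
  filter_upwards [enorm_ae_le_eLpNormEssSup (X i) P] with ω hω
  rw [← eLpNorm_exponent_top, (hX i).eLpNorm_eq] at hω
  simpa only [toReal_enorm] using ENNReal.toReal_mono hfin hω

theorem essSup_bound_Qn_add_Rn_general
    {H : Type*} [NormedAddCommGroup H] [InnerProductSpace ℝ H] [CompleteSpace H]
    [MeasurableSpace H] [BorelSpace H]
    {Ω : Type*} [MeasurableSpace Ω] {P : Measure Ω}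
    (ε : ℤ → Ω → H)
    (hεident : ∀ k, IdentDistrib (ε k) (ε 0) P P)
    (hεbdd : MemLp (ε 0) ∞ P)
    (a : ℤ → H →L[ℝ] H) (ha : Summable fun j => ‖a j‖)
    (ha1 : Summable fun j : ℤ => |(j : ℝ)| * ‖a j‖)
    (A : H →L[ℝ] H) (hA : A = ∑' j : ℤ, a j)
    (b : ℤ → H →L[ℝ] H) (hb : ∀ j : ℤ, j ≠ 0 → b j = a j) (hb0 : b 0 = a 0 - A)
    (c : ℤ → ℕ → H →L[ℝ] H)
    (hc : ∀ (j : ℤ) (n : ℕ), c j n = ∑ i ∈ Finset.Icc (1 : ℤ) n, b (i - j))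
    (n : ℕ)
    (Q R : Ω → H)
    (hQ : ∀ ω, Q ω = ∑ k ∈ Finset.Icc (1 : ℤ) n,
      ∑' j : {j : ℤ // (n : ℤ) < |j|}, a (k - (j : ℤ)) (ε (j : ℤ) ω))
    (hR : ∀ ω, R ω = ∑ j ∈ Finset.Icc (-(n : ℤ)) n, c j n (ε j ω)) :
    eLpNorm (fun ω => Q ω + R ω) ∞ P
      ≤ ENNReal.ofReal (7 * (eLpNorm (ε 0) ∞ P).toReal
        * ∑' j : ℤ, |(j : ℝ)| * ‖a j‖) := by
  set M := (eLpNorm (ε 0) ∞ P).toReal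
  set S := ∑' j : ℤ, |(j : ℝ)| * ‖a j‖
  have hM : 0 ≤ M := ENNReal.toReal_nonneg
  have hS : 0 ≤ S := tsum_nonneg fun j => by positivity
  have hcoeff (j : ℤ) :
      c j n = ∑ i ∈ Finset.Icc 1 (n : ℤ), a (i - j) - if j ∈ Finset.Icc 1 (n : ℤ) then A else 0 :=
    (hc j n).trans (sum_comp_sub_eq_sub_ite hb hb0 _ j)
  rw [eLpNorm_exponent_top]
  refine eLpNormEssSup_le_of_ae_bound ?_
  filter_upwards [ae_forall_norm_le_of_identDistrib hεident hεbdd.2.ne] with ω hω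
  have hQω : ‖Q ω‖ ≤ S * M := by
    rw [hQ ω]
    exact norm_sum_tsum_tail_apply_le ha ha1 n hω
  have hRω : ‖R ω‖ ≤ 2 * S * M := by
    rw [hR ω]
    refine (norm_sum_apply_le _ _ hω).trans ?_
    gcongr
    simp_rw [hcoeff, hA]
    exact sum_norm_sub_ite_tsum_le ha ha1 n
  calc ‖Q ω + R ω‖ ≤ ‖Q ω‖ + ‖R ω‖ := norm_add_le _ _
    _ ≤ S * M + 2 * S * M := add_le_add hQω hRω
    _ ≤ 7 * M * S := by nlinarith [mul_nonneg hM hS]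

/-- If `ε₀` is essentially bounded and `∑_{j∈ℤ} |j|‖a_j‖ < ∞`, then for
every positive integer `n`, `‖Q_n + R_n‖_∞ ≤ 7 ‖ε₀‖_∞ ∑_{j∈ℤ} |j| ‖a_j‖`. -/
theorem essSup_bound_Qn_add_Rn
    {H : Type*} [NormedAddCommGroup H] [InnerProductSpace ℝ H] [CompleteSpace H]
    [SecondCountableTopology H] [MeasurableSpace H] [BorelSpace H]
    {Ω : Type*} [MeasurableSpace Ω] {P : Measure Ω} [IsProbabilityMeasure P]
    (ε : ℤ → Ω → H) (hεmeas : ∀ k, Measurable (ε k))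
    (hεindep : iIndepFun ε P)
    (hεident : ∀ k, IdentDistrib (ε k) (ε 0) P P)
    (hεint : Integrable (ε 0) P) (hεcent : ∫ ω, ε 0 ω ∂P = 0)
    (hεbdd : MemLp (ε 0) ∞ P)
    (a : ℤ → H →L[ℝ] H) (ha : Summable fun j => ‖a j‖)
    (ha1 : Summable fun j : ℤ => |(j : ℝ)| * ‖a j‖)
    (A : H →L[ℝ] H) (hA : A = ∑' j : ℤ, a j)
    (b : ℤ → H →L[ℝ] H) (hb : ∀ j : ℤ, j ≠ 0 → b j = a j) (hb0 : b 0 = a 0 - A)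
    (c : ℤ → ℕ → H →L[ℝ] H)
    (hc : ∀ (j : ℤ) (n : ℕ), c j n = ∑ i ∈ Finset.Icc (1 : ℤ) n, b (i - j))
    (n : ℕ) (hn : 0 < n)
    (Q R : Ω → H)
    (hQ : ∀ ω, Q ω = ∑ k ∈ Finset.Icc (1 : ℤ) n,
      ∑' j : {j : ℤ // (n : ℤ) < |j|}, a (k - (j : ℤ)) (ε (j : ℤ) ω))
    (hR : ∀ ω, R ω = ∑ j ∈ Finset.Icc (-(n : ℤ)) n, c j n (ε j ω)) :
    eLpNorm (fun ω => Q ω + R ω) ∞ P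
      ≤ ENNReal.ofReal (7 * (eLpNorm (ε 0) ∞ P).toReal
        * ∑' j : ℤ, |(j : ℝ)| * ‖a j‖) :=
  essSup_bound_Qn_add_Rn_general ε hεident hεbdd a ha ha1 A hA b hb hb0 c hc n Q R hQ hR
end

section
/- Let ψ_1(x) = e^x − 1, h(x) = x·ψ_1(x) for x > 0 (h being a strictly increasing bijection of (0,∞) onto (0,∞)), and φ(x) = x·h^{−1}(1/x) for x > 0. Then φ(x)/(x·log(1 + 1/x)) remains bounded as x → 0⁺; that is, there exist constants C > 0 and δ > 0 such that φ(x) ≤ C·x·log(1 + 1/x) for all x ∈ (0, δ). -/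
/-! With `h(x) = x (eˣ - 1)` increasing on `[0, ∞)`, the bound `h⁻¹(y) ≤ 2 log(1 + y)` for
`y ≥ 1` follows from `h(2 log(1 + y)) = 2 log(1 + y) ((1 + y)² - 1) ≥ y`. Putting `y = 1/x`
gives `φ(x) ≤ 2 x log(1 + 1/x)` on `(0, 1)`. -/

open Real Set

lemma strictMonoOn_mul_exp_sub_one : StrictMonoOn (fun x : ℝ => x * (exp x - 1)) (Ici 0) := by
  intro a (ha : 0 ≤ a) b (_ : 0 ≤ b) hab
  have hexp : exp a < exp b := exp_lt_exp.2 hab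
  have hexp_a : 1 ≤ exp a := one_le_exp ha
  dsimp only
  nlinarith

lemma le_two_mul_log_one_add_mul_exp_sub_one {y : ℝ} (hy : 1 ≤ y) :
    y ≤ 2 * log (1 + y) * (exp (2 * log (1 + y)) - 1) := by
  have hexp : exp (2 * log (1 + y)) = (1 + y) ^ 2 := by
    rw [two_mul, exp_add, exp_log (by linarith)]; ring
  have hlog : 1 / 2 ≤ log (1 + y) :=
    (log_two_gt_d9.trans' (by norm_num)).le.trans (log_le_log (by norm_num) (by linarith))
  rw [hexp]
  nlinarith [mul_nonneg (sub_nonneg.2 hlog) (by positivity : 0 ≤ y * (y + 2))]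

lemma le_two_mul_log_one_add_of_rightInvOn {g : ℝ → ℝ}
    (hg : RightInvOn g (fun x => x * (exp x - 1)) (Ioi 0)) (hg_pos : MapsTo g (Ioi 0) (Ioi 0))
    {y : ℝ} (hy : 1 ≤ y) : g y ≤ 2 * log (1 + y) := by
  have hy_pos : y ∈ Ioi (0 : ℝ) := mem_Ioi.2 (by linarith)
  have hlog_nonneg : 0 ≤ 2 * log (1 + y) := mul_nonneg zero_le_two (log_nonneg (by linarith))
  refine (strictMonoOn_mul_exp_sub_one.le_iff_le
    (mem_Ici.2 (hg_pos hy_pos).out.le) hlog_nonneg).1 ?_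
  simpa only [hg hy_pos] using le_two_mul_log_one_add_mul_exp_sub_one hy

theorem phi_asymptotic_bound_general
    (g : ℝ → ℝ)
    (hg : Set.InvOn g (fun x => x * (Real.exp x - 1)) (Set.Ioi (0 : ℝ)) (Set.Ioi (0 : ℝ)))
    (hgmaps : Set.MapsTo g (Set.Ioi (0 : ℝ)) (Set.Ioi (0 : ℝ))) :
    ∃ C > (0 : ℝ), ∃ δ > (0 : ℝ), ∀ x ∈ Set.Ioo (0 : ℝ) δ,
      x * g (1 / x) ≤ C * (x * Real.log (1 + 1 / x)) := by
  refine ⟨2, two_pos, 1, one_pos, fun x ⟨hx_pos, hx_lt_one⟩ => ?_⟩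
  have hy : 1 ≤ 1 / x := by rw [le_div_iff₀ hx_pos]; linarith
  calc x * g (1 / x) ≤ x * (2 * log (1 + 1 / x)) :=
        mul_le_mul_of_nonneg_left (le_two_mul_log_one_add_of_rightInvOn hg.2 hgmaps hy) hx_pos.le
    _ = 2 * (x * log (1 + 1 / x)) := by ring

/-- Let `h(x) = x (eˣ - 1)` on `(0,∞)`, a strictly increasing continuous
bijection of `(0,∞)` onto `(0,∞)` with inverse `g = h⁻¹`, and `φ(x) = x g(1/x)`. Then
`φ(x) / (x log(1 + 1/x))` stays bounded as `x → 0⁺`: there are `C > 0` and `δ > 0` such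
that `φ(x) ≤ C x log(1 + 1/x)` for all `x ∈ (0, δ)`. -/
theorem phi_asymptotic_bound
    (g : ℝ → ℝ)
    (hg : Set.InvOn g (fun x => x * (Real.exp x - 1)) (Set.Ioi (0 : ℝ)) (Set.Ioi (0 : ℝ)))
    (hgmaps : Set.MapsTo g (Set.Ioi (0 : ℝ)) (Set.Ioi (0 : ℝ)))
    (hmaps : Set.MapsTo (fun x => x * (Real.exp x - 1)) (Set.Ioi (0 : ℝ))
      (Set.Ioi (0 : ℝ))) :
    ∃ C > (0 : ℝ), ∃ δ > (0 : ℝ), ∀ x ∈ Set.Ioo (0 : ℝ) δ,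
      x * g (1 / x) ≤ C * (x * Real.log (1 + 1 / x)) :=
  phi_asymptotic_bound_general g hg hgmaps
end
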